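/- Assume m and l′ are both odd (case (iii)). Then the set Δ_{s^{−1}} = {α ∈ Δ₊ : s^{−1}α ∈ Δ₋} consists exactly of the following roots: the roots α_{2t−1} + α_{2t} + α_{2t+1} for 1 ≤ t ≤ (m−1)/2; the roots α_m + α_{m+1} + ⋯ + α_{m+q} for 1 ≤ q ≤ p; the root γ′ = α_m + ⋯ + α_{m+p+2}; the roots α_i + α_{i+1} + ⋯ + α_{m+p+2} for m+2 ≤ i ≤ m+p+2; the roots α_{m+p+2t} + α_{m+p+2t+1} + α_{m+p+2t+2} for 1 ≤ t ≤ (m−1)/2; and the simple roots α_1, α_3, …, α_m and α_{m+p+2}, α_{m+p+4}, …, α_{m+p+m+1}. -/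

import Mathlib

/- Common framework: type A_l root system realized in ℝ^{ℕ} (coordinates 1,…,l+1 used),
   the Weyl group as permutations of ℕ acting by permuting coordinates, and the
   Weyl group element s = s₁s₂ of Proposition 4.2 (all four parity cases). -/

noncomputable section

namespace DPW

/-- The ambient vector space (only coordinates 1,…,l+1 are used). -/
abbrev V : Type := ℕ → ℝ

/-- Standard basis vector e_i. -/
def evec (i : ℕ) : V := fun j => if j = i then 1 else 0

/-- The root e_i − e_j. -/
def rt (i j : ℕ) : V := evec i - evec j

/-- The root system Δ of type A_l. -/
def Delta (l : ℕ) : Set V :=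
  {v | ∃ i j, 1 ≤ i ∧ i ≤ l + 1 ∧ 1 ≤ j ∧ j ≤ l + 1 ∧ i ≠ j ∧ v = rt i j}

/-- Positive roots Δ₊. -/
def DeltaPos (l : ℕ) : Set V :=
  {v | ∃ i j, 1 ≤ i ∧ i < j ∧ j ≤ l + 1 ∧ v = rt i j}

/-- Negative roots Δ₋ = −Δ₊. -/
def DeltaNeg (l : ℕ) : Set V := {v | -v ∈ DeltaPos l}

/-- Action of a permutation on V : (σ·v)_j = v_{σ⁻¹(j)}. -/
def pact (σ : Equiv.Perm ℕ) (v : V) : V := fun j => v (σ⁻¹ j)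

/-- row(e_a − e_b) = a. -/
def rowOf (v : V) : ℕ := sInf {a | v a = 1}

/-- col(e_a − e_b) = b. -/
def colOf (v : V) : ℕ := sInf {b | v b = (-1 : ℝ)}

/-- Product of the simple reflections s_{α_i} = (i, i+1) for i in a list. -/
def swapProd (idxs : List ℕ) : Equiv.Perm ℕ :=
  (idxs.map (fun i => Equiv.swap i (i + 1))).prod

/-- The Weyl group element s = s₁s₂ (cases (i)–(iv) according to the parities of
    m = ⌊(l′−1)/2⌋ and l′; here p = l − l′ and s_γ = (m+1, m+p+2)). -/
def weylS (l l' : ℕ) : Equiv.Perm ℕ :=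
  let m := (l' - 1) / 2
  let p := l - l'
  if m % 2 = 0 then
    if l' % 2 = 1 then
      -- case (i)
      (swapProd (List.range' 2 (m / 2) 2) * swapProd (List.range' (m + p + 2) (m / 2) 2)) *
        (swapProd (List.range' 1 (m / 2) 2) * Equiv.swap (m + 1) (m + p + 2) *
          swapProd (List.range' (m + p + 3) (m / 2) 2))
    else
      -- case (ii)
      (swapProd (List.range' 2 (m / 2) 2) * swapProd (List.range' (m + p + 2) (m / 2 + 1) 2)) *
        (swapProd (List.range' 1 (m / 2) 2) * Equiv.swap (m + 1) (m + p + 2) *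
          swapProd (List.range' (m + p + 3) (m / 2) 2))
  else
    if l' % 2 = 1 then
      -- case (iii)
      (swapProd (List.range' 1 ((m + 1) / 2) 2) *
          swapProd (List.range' (m + p + 2) ((m + 1) / 2) 2)) *
        (swapProd (List.range' 2 ((m - 1) / 2) 2) * Equiv.swap (m + 1) (m + p + 2) *
          swapProd (List.range' (m + p + 3) ((m - 1) / 2) 2))
    else
      -- case (iv)
      (swapProd (List.range' 1 ((m + 1) / 2) 2) *
          swapProd (List.range' (m + p + 2) ((m + 1) / 2) 2)) *
        (swapProd (List.range' 2 ((m - 1) / 2) 2) * Equiv.swap (m + 1) (m + p + 2) *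
          swapProd (List.range' (m + p + 3) ((m + 1) / 2) 2))

/-- Δ_s = {α ∈ Δ₊ : sα ∈ Δ₋}. -/
def DeltaS (l : ℕ) (s : Equiv.Perm ℕ) : Set V :=
  {v ∈ DeltaPos l | pact s v ∈ DeltaNeg l}

/-- Δ_{s⁻¹} = {α ∈ Δ₊ : s⁻¹α ∈ Δ₋}. -/
def DeltaSinv (l : ℕ) (s : Equiv.Perm ℕ) : Set V :=
  {v ∈ DeltaPos l | pact s⁻¹ v ∈ DeltaNeg l}

/-- (Δ̄_K)₊ = {α ∈ Δ₊ : sα ≠ α}. -/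
def DeltaKpos (l : ℕ) (s : Equiv.Perm ℕ) : Set V :=
  {v ∈ DeltaPos l | pact s v ≠ v}

/-- (Δ̄_K)₋ = −(Δ̄_K)₊. -/
def DeltaKneg (l : ℕ) (s : Equiv.Perm ℕ) : Set V := {v | -v ∈ DeltaKpos l s}

/-- Δ^C = {α ∈ (Δ̄_K)₊ : row(sα) = row(α)}. -/
def DeltaC (l : ℕ) (s : Equiv.Perm ℕ) : Set V :=
  {v ∈ DeltaKpos l s | rowOf (pact s v) = rowOf v}

/-- Δ^R = {α ∈ (Δ̄_K)₊ : col(sα) = col(α)}. -/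
def DeltaR (l : ℕ) (s : Equiv.Perm ℕ) : Set V :=
  {v ∈ DeltaKpos l s | colOf (pact s v) = colOf v}

/-- Δ^O = (Δ̄_K)₊ \ (Δ^C ∪ Δ^R). -/
def DeltaO (l : ℕ) (s : Equiv.Perm ℕ) : Set V :=
  DeltaKpos l s \ (DeltaC l s ∪ DeltaR l s)

/-- Δ₁^O = {α ∈ Δ^O : row(α) ≥ m+p+2}. -/
def DeltaO1 (l : ℕ) (s : Equiv.Perm ℕ) (m p : ℕ) : Set V :=
  {v ∈ DeltaO l s | m + p + 2 ≤ rowOf v}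

/-- Δ₂^O = {α ∈ Δ^O : col(α) ≤ m+1}. -/
def DeltaO2 (l : ℕ) (s : Equiv.Perm ℕ) (m : ℕ) : Set V :=
  {v ∈ DeltaO l s | colOf v ≤ m + 1}

/-- Δ₃^O = Δ^O \ (Δ₁^O ∪ Δ₂^O). -/
def DeltaO3 (l : ℕ) (s : Equiv.Perm ℕ) (m p : ℕ) : Set V :=
  DeltaO l s \ (DeltaO1 l s m p ∪ DeltaO2 l s m)

/-- Δ̄_K^k = {α ∈ (Δ̄_K)₊ : s^{−j}α ∈ (Δ̄_K)₊ for 1 ≤ j ≤ k−1 and s^{−k}α ∈ (Δ̄_K)₋}. -/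
def DeltaKk (l : ℕ) (s : Equiv.Perm ℕ) (k : ℕ) : Set V :=
  {v ∈ DeltaKpos l s |
    (∀ j, 1 ≤ j → j ≤ k - 1 → pact (s⁻¹ ^ j) v ∈ DeltaKpos l s) ∧
      pact (s⁻¹ ^ k) v ∈ DeltaKneg l s}

/-- d(α) = min{k ≥ 1 : s^{−k}α ∈ Δ₋}. -/
def dd (l : ℕ) (s : Equiv.Perm ℕ) (v : V) : ℕ :=
  sInf {k | 1 ≤ k ∧ pact (s⁻¹ ^ k) v ∈ DeltaNeg l}

/-- Δ_Z = {e_i − e_j : m+2 ≤ i, j ≤ m+p+1, i ≠ j}. -/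
def DeltaZ (m p : ℕ) : Set V :=
  {v | ∃ i j, m + 2 ≤ i ∧ i ≤ m + p + 1 ∧ m + 2 ≤ j ∧ j ≤ m + p + 1 ∧ i ≠ j ∧ v = rt i j}

/-- The ⟨s⟩-orbit of a vector. -/
def orbitOf (s : Equiv.Perm ℕ) (v : V) : Set V := {w | ∃ n : ℤ, w = pact (s ^ n) v}

/-- The set P_κ (for κ ∈ Δ̄_K^k). -/
def Pk (l : ℕ) (s : Equiv.Perm ℕ) (k : ℕ) (κ : V) : Set (V × V) :=
  {q | (∃ i, 2 ≤ i ∧ i ≤ k - 1 ∧ q.1 ∈ DeltaKk l s i) ∧ q.2 ∈ DeltaKk l s k ∧ κ = q.1 + q.2}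

/-- The set P′_κ (for κ ∈ Δ̄_K^k). -/
def Pk' (l : ℕ) (s : Equiv.Perm ℕ) (k : ℕ) (κ : V) : Set (V × V) :=
  {q | q.1 ∈ DeltaKk l s k ∧ q.2 ∈ DeltaKk l s k ∧ κ = q.1 + q.2}

/-- The eigenvector v^λ of case (i) (m even, l′ = 2m+1 odd). -/
def vlam (m p : ℕ) (lam : ℂ) : ℕ → ℂ := fun j =>
  if j = 0 then 0
  else if j ≤ m + 1 then
    (if j % 2 = 1 then lam ^ ((4 * m + 5 - j) / 2) else lam ^ (j / 2))
  else if j ≤ m + p + 1 then 0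
  else if j ≤ m + p + m + 2 then
    (if (j - (m + p)) % 2 = 0 then lam ^ ((m + (j - (m + p))) / 2)
     else lam ^ ((3 * m + 5 - (j - (m + p))) / 2))
  else 0



/-! ### Auxiliary machinery for Statement 5 -/

lemma swapProd_apply (a n x : ℕ) : swapProd (List.range' a n 2) x =
    if a ≤ x ∧ x < a + 2 * n then (if (x - a) % 2 = 0 then x + 1 else x - 1) else x := by
  induction n generalizing a with
  | zero => simp [swapProd]
  | succ n ih =>
    rw [List.range'_succ]
    simp only [swapProd, List.map_cons, List.prod_cons]
    rw [Equiv.Perm.mul_apply]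
    have hrest : (List.map (fun i => Equiv.swap i (i + 1)) (List.range' (a + 2) n 2)).prod x
        = if a + 2 ≤ x ∧ x < a + 2 + 2 * n then (if (x - (a + 2)) % 2 = 0 then x + 1 else x - 1)
          else x := ih (a + 2)
    rw [hrest, Equiv.swap_apply_def]
    split_ifs <;> omega

/-- Explicit formula for s⁻¹ in case (iii). -/
def ftiii (m p x : ℕ) : ℕ :=
  if x < 1 ∨ 2 * m + p + 2 < x then x
  else if x ≤ m + 1 then
    if x % 2 = 1 then (if x = m then m + p + 2 else x + 2)
    else (if x = 2 then 1 else x - 2)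
  else if x ≤ m + p + 1 then x
  else
    if (x - m - p) % 2 = 0 then (if x = 2 * m + p + 1 then x + 1 else x + 2)
    else (if x = m + p + 3 then m + 1 else x - 2)

lemma weylS_caseiii (m p : ℕ) (hmo : m % 2 = 1) :
    weylS (2 * m + p + 1) (2 * m + 1) =
      (swapProd (List.range' 1 ((m + 1) / 2) 2) *
          swapProd (List.range' (m + p + 2) ((m + 1) / 2) 2)) *
        (swapProd (List.range' 2 ((m - 1) / 2) 2) * Equiv.swap (m + 1) (m + p + 2) *
          swapProd (List.range' (m + p + 3) ((m - 1) / 2) 2)) := by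
  have h1 : (2 * m + 1 - 1) / 2 = m := by omega
  have h2 : 2 * m + p + 1 - (2 * m + 1) = p := by omega
  simp only [weylS, h1, h2]
  rw [if_neg (by omega), if_pos (by omega)]

/-- Explicit formula for s₁ = P1 * P2. -/
def g1iii (m p z : ℕ) : ℕ :=
  if 1 ≤ z ∧ z ≤ m + 1 then (if z % 2 = 1 then z + 1 else z - 1)
  else if m + p + 2 ≤ z ∧ z ≤ 2 * m + p + 2 then (if (z - m - p) % 2 = 0 then z + 1 else z - 1)
  else z

/-- Explicit formula for s₂ = P3 * swap * P4. -/
def g2iii (m p z : ℕ) : ℕ :=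
  if 2 ≤ z ∧ z ≤ m then (if z % 2 = 0 then z + 1 else z - 1)
  else if z = m + 1 then m + p + 2
  else if z = m + p + 2 then m + 1
  else if m + p + 3 ≤ z ∧ z ≤ 2 * m + p + 1 then (if (z - m - p) % 2 = 1 then z + 1 else z - 1)
  else z

lemma g1iii_apply (m p : ℕ) (hm3 : 3 ≤ m) (hmo : m % 2 = 1) (z : ℕ) :
    (swapProd (List.range' 1 ((m + 1) / 2) 2) *
      swapProd (List.range' (m + p + 2) ((m + 1) / 2) 2)) z = g1iii m p z := by
  rw [Equiv.Perm.mul_apply]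
  obtain ⟨w, hw⟩ : ∃ w, swapProd (List.range' (m + p + 2) ((m + 1) / 2) 2) z = w := ⟨_, rfl⟩
  rw [hw]; rw [swapProd_apply] at hw
  rw [swapProd_apply]
  unfold g1iii
  split_ifs at hw ⊢ <;> omega

lemma g2iii_apply (m p : ℕ) (hm3 : 3 ≤ m) (hmo : m % 2 = 1) (z : ℕ) :
    (swapProd (List.range' 2 ((m - 1) / 2) 2) * Equiv.swap (m + 1) (m + p + 2) *
      swapProd (List.range' (m + p + 3) ((m - 1) / 2) 2)) z = g2iii m p z := by
  rw [Equiv.Perm.mul_apply, Equiv.Perm.mul_apply]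
  obtain ⟨w, hw⟩ : ∃ w, swapProd (List.range' (m + p + 3) ((m - 1) / 2) 2) z = w := ⟨_, rfl⟩
  rw [hw]; rw [swapProd_apply] at hw
  obtain ⟨u, hu⟩ : ∃ u, Equiv.swap (m + 1) (m + p + 2) w = u := ⟨_, rfl⟩
  rw [hu]; rw [Equiv.swap_apply_def] at hu
  rw [swapProd_apply]
  unfold g2iii
  split_ifs at hw hu ⊢ <;> omega

set_option maxHeartbeats 1000000 in
lemma s_ftiii (m p : ℕ) (hm3 : 3 ≤ m) (hmo : m % 2 = 1) (y : ℕ) :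
    weylS (2 * m + p + 1) (2 * m + 1) (ftiii m p y) = y := by
  rw [weylS_caseiii m p hmo, Equiv.Perm.mul_apply]
  obtain ⟨z0, h0⟩ : ∃ z, ftiii m p y = z := ⟨_, rfl⟩
  rw [h0, g2iii_apply m p hm3 hmo]
  obtain ⟨z1, h1⟩ : ∃ z, g2iii m p z0 = z := ⟨_, rfl⟩
  rw [h1, g1iii_apply m p hm3 hmo]
  unfold ftiii at h0
  unfold g2iii at h1
  unfold g1iii
  split_ifs at h0 h1 ⊢ <;> omega

lemma ftiii_eq_inv (m p : ℕ) (hm3 : 3 ≤ m) (hmo : m % 2 = 1) (x : ℕ) :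
    (weylS (2 * m + p + 1) (2 * m + 1))⁻¹ x = ftiii m p x :=
  (weylS (2 * m + p + 1) (2 * m + 1)).injective
    (by rw [Equiv.Perm.coe_inv, Equiv.apply_symm_apply, s_ftiii m p hm3 hmo x])

lemma ftiii_inj (m p : ℕ) (hm3 : 3 ≤ m) (hmo : m % 2 = 1) {i j : ℕ}
    (h : ftiii m p i = ftiii m p j) : i = j := by
  have h1 := s_ftiii m p hm3 hmo i
  have h2 := s_ftiii m p hm3 hmo j
  rw [h] at h1
  exact h1.symm.trans h2

lemma ftiii_bds (m p : ℕ) (hm3 : 3 ≤ m) (hmo : m % 2 = 1) (x : ℕ) (h1 : 1 ≤ x)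
    (h2 : x ≤ 2 * m + p + 2) : 1 ≤ ftiii m p x ∧ ftiii m p x ≤ 2 * m + p + 2 := by
  unfold ftiii
  split_ifs <;> omega

lemma rt_apply (i j x : ℕ) : rt i j x = (if x = i then (1:ℝ) else 0) - (if x = j then 1 else 0) :=
  rfl

lemma rt_inj {a b c d : ℕ} (hab : a ≠ b) (hcd : c ≠ d) (h : rt a b = rt c d) :
    a = c ∧ b = d := by
  have h1 := congrFun h a
  have h2 := congrFun h b
  rw [rt_apply, rt_apply] at h1
  rw [rt_apply, rt_apply] at h2
  have hac : a = c := by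
    by_contra hac
    split_ifs at h1 <;> first | omega | norm_num at h1
  have hbd : b = d := by
    by_contra hbd
    split_ifs at h2 <;> first | omega | norm_num at h2
  exact ⟨hac, hbd⟩

lemma neg_rt (a b : ℕ) : -(rt a b) = rt b a := by
  funext x
  simp only [rt, evec, Pi.neg_apply, Pi.sub_apply]
  ring

lemma mem_DeltaPos_rt {l a b : ℕ} (hab : a ≠ b) :
    rt a b ∈ DeltaPos l ↔ 1 ≤ a ∧ a < b ∧ b ≤ l + 1 := by
  constructor
  · rintro ⟨i, j, hi, hij, hj, heq⟩
    obtain ⟨rfl, rfl⟩ := rt_inj hab (by omega) heq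
    omega
  · rintro ⟨h1, h2, h3⟩
    exact ⟨a, b, h1, h2, h3, rfl⟩

lemma mem_DeltaNeg_rt {l a b : ℕ} (hab : a ≠ b) :
    rt a b ∈ DeltaNeg l ↔ 1 ≤ b ∧ b < a ∧ a ≤ l + 1 := by
  show -(rt a b) ∈ DeltaPos l ↔ _
  rw [neg_rt]
  exact mem_DeltaPos_rt (Ne.symm hab)

lemma pact_rt (σ : Equiv.Perm ℕ) (i j : ℕ) : pact σ (rt i j) = rt (σ i) (σ j) := by
  funext x
  have hki : (σ⁻¹ x = i) ↔ (x = σ i) :=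
    ⟨fun h => by rw [← h, Equiv.Perm.coe_inv, Equiv.apply_symm_apply], fun h => by rw [h, Equiv.Perm.coe_inv, Equiv.symm_apply_apply]⟩
  have hkj : (σ⁻¹ x = j) ↔ (x = σ j) :=
    ⟨fun h => by rw [← h, Equiv.Perm.coe_inv, Equiv.apply_symm_apply], fun h => by rw [h, Equiv.Perm.coe_inv, Equiv.symm_apply_apply]⟩
  show rt i j (σ⁻¹ x) = rt (σ i) (σ j) x
  rw [rt_apply, rt_apply]
  congr 1
  · exact if_congr hki rfl rfl
  · exact if_congr hkj rfl rfl

set_option maxHeartbeats 0 in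
/-- Classification of the inversions of s⁻¹ in case (iii). -/
lemma coreiii (m p : ℕ) (hm3 : 3 ≤ m) (hmo : m % 2 = 1) (i j : ℕ) (h1 : 1 ≤ i) (h2 : i < j)
    (h3 : j ≤ 2 * m + p + 2) :
    ftiii m p j < ftiii m p i ↔
      ((i % 2 = 1 ∧ i ≤ m - 2 ∧ j = i + 3) ∨
       (i = m ∧ m + 2 ≤ j ∧ j ≤ m + p + 1) ∨
       (i = m ∧ j = m + p + 3) ∨
       (m + 2 ≤ i ∧ i ≤ m + p + 2 ∧ j = m + p + 3) ∨
       ((i + m + p) % 2 = 0 ∧ m + p + 2 ≤ i ∧ i ≤ 2 * m + p - 1 ∧ j = i + 3) ∨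
       (i % 2 = 1 ∧ i ≤ m ∧ j = i + 1) ∨
       ((i + m + p) % 2 = 0 ∧ m + p + 2 ≤ i ∧ i ≤ 2 * m + p + 1 ∧ j = i + 1)) := by
  obtain ⟨zi, hzi⟩ : ∃ z, ftiii m p i = z := ⟨_, rfl⟩
  obtain ⟨zj, hzj⟩ : ∃ z, ftiii m p j = z := ⟨_, rfl⟩
  rw [hzi, hzj]
  unfold ftiii at hzi hzj
  constructor
  · intro hlt
    by_cases hd : j = i + 1 <;>
      split_ifs at hzi hzj <;>
      first
      | exact Or.inl (by omega)
      | exact Or.inr (Or.inl (by omega))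
      | exact Or.inr (Or.inr (Or.inl (by omega)))
      | exact Or.inr (Or.inr (Or.inr (Or.inl (by omega))))
      | exact Or.inr (Or.inr (Or.inr (Or.inr (Or.inl (by omega)))))
      | exact Or.inr (Or.inr (Or.inr (Or.inr (Or.inr (Or.inl (by omega))))))
      | exact Or.inr (Or.inr (Or.inr (Or.inr (Or.inr (Or.inr (by omega))))))
  · intro hc
    rcases hc with hc | hc | hc | hc | hc | hc | hc <;> split_ifs at hzi hzj <;> omega

lemma mem_DeltaSinv_iff (m p : ℕ) (hm3 : 3 ≤ m) (hmo : m % 2 = 1) (v : V) :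
    v ∈ DeltaSinv (2 * m + p + 1) (weylS (2 * m + p + 1) (2 * m + 1)) ↔
      ∃ i j, 1 ≤ i ∧ i < j ∧ j ≤ 2 * m + p + 2 ∧ ftiii m p j < ftiii m p i ∧ v = rt i j := by
  constructor
  · rintro ⟨hpos, hneg⟩
    obtain ⟨i, j, hi, hij, hj, rfl⟩ := hpos
    refine ⟨i, j, hi, hij, by omega, ?_, rfl⟩
    rw [pact_rt, ftiii_eq_inv m p hm3 hmo i, ftiii_eq_inv m p hm3 hmo j] at hneg
    have hne : ftiii m p i ≠ ftiii m p j := fun h => by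
      have := ftiii_inj m p hm3 hmo h; omega
    rw [mem_DeltaNeg_rt hne] at hneg
    exact hneg.2.1
  · rintro ⟨i, j, hi, hij, hj, hlt, rfl⟩
    refine ⟨⟨i, j, hi, hij, by omega, rfl⟩, ?_⟩
    rw [pact_rt, ftiii_eq_inv m p hm3 hmo i, ftiii_eq_inv m p hm3 hmo j]
    have hne : ftiii m p i ≠ ftiii m p j := fun h => by
      have := ftiii_inj m p hm3 hmo h; omega
    have hbi := ftiii_bds m p hm3 hmo i hi (by omega)
    have hbj := ftiii_bds m p hm3 hmo j (by omega) hj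
    rw [mem_DeltaNeg_rt hne]
    exact ⟨hbj.1, hlt, by omega⟩

/-- explicit description of Δ_{s⁻¹} in case (iii) (m odd, l′ odd). -/
theorem stmt5 (l l' m p : ℕ) (h5 : 5 ≤ l') (hll : l' ≤ l)
    (hm : m = (l' - 1) / 2) (hp : p = l - l')
    (hmo : m % 2 = 1) (hlo : l' % 2 = 1) :
    DeltaSinv l (weylS l l') =
      {v | (∃ t, 1 ≤ t ∧ t ≤ (m - 1) / 2 ∧ v = rt (2 * t - 1) (2 * t + 2)) ∨
        (∃ q, 1 ≤ q ∧ q ≤ p ∧ v = rt m (m + q + 1)) ∨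
        v = rt m (m + p + 3) ∨
        (∃ i, m + 2 ≤ i ∧ i ≤ m + p + 2 ∧ v = rt i (m + p + 3)) ∨
        (∃ t, 1 ≤ t ∧ t ≤ (m - 1) / 2 ∧ v = rt (m + p + 2 * t) (m + p + 2 * t + 3)) ∨
        (∃ t, 1 ≤ t ∧ t ≤ (m + 1) / 2 ∧ v = rt (2 * t - 1) (2 * t)) ∨
        (∃ t, 1 ≤ t ∧ t ≤ (m + 1) / 2 ∧ v = rt (m + p + 2 * t) (m + p + 2 * t + 1))} := by
  have hm3 : 3 ≤ m := by omega
  obtain rfl : l' = 2 * m + 1 := by omega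
  obtain rfl : l = 2 * m + p + 1 := by omega
  ext v
  rw [mem_DeltaSinv_iff m p hm3 hmo]
  simp only [Set.mem_setOf_eq]
  constructor
  · rintro ⟨i, j, hi, hij, hj, hlt, rfl⟩
    have hc := (coreiii m p hm3 hmo i j hi hij hj).mp hlt
    rcases hc with ⟨c1, c2, c3⟩ | ⟨c1, c2, c3⟩ | ⟨c1, c2⟩ | ⟨c1, c2, c3⟩ | ⟨c1, c2, c3, c4⟩ |
      ⟨c1, c2, c3⟩ | ⟨c1, c2, c3, c4⟩
    · exact Or.inl ⟨(i + 1) / 2, by omega, by omega,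
        by rw [show 2 * ((i + 1) / 2) - 1 = i by omega, show 2 * ((i + 1) / 2) + 2 = j by omega]⟩
    · exact Or.inr (Or.inl ⟨j - m - 1, by omega, by omega,
        by rw [show m + (j - m - 1) + 1 = j by omega, c1]⟩)
    · exact Or.inr (Or.inr (Or.inl (by rw [c1, c2])))
    · exact Or.inr (Or.inr (Or.inr (Or.inl ⟨i, c1, c2, by rw [c3]⟩)))
    · refine Or.inr (Or.inr (Or.inr (Or.inr (Or.inl ⟨(i - m - p) / 2, by omega, by omega, ?_⟩))))
      rw [show m + p + 2 * ((i - m - p) / 2) + 3 = j by omega,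
        show m + p + 2 * ((i - m - p) / 2) = i by omega]
    · refine Or.inr (Or.inr (Or.inr (Or.inr (Or.inr (Or.inl
        ⟨(i + 1) / 2, by omega, by omega, ?_⟩)))))
      rw [show 2 * ((i + 1) / 2) - 1 = i by omega, show 2 * ((i + 1) / 2) = j by omega]
    · refine Or.inr (Or.inr (Or.inr (Or.inr (Or.inr (Or.inr
        ⟨(i - m - p) / 2, by omega, by omega, ?_⟩)))))
      rw [show m + p + 2 * ((i - m - p) / 2) + 1 = j by omega,
        show m + p + 2 * ((i - m - p) / 2) = i by omega]
  · rintro (⟨t, ht1, ht2, rfl⟩ | ⟨q, hq1, hq2, rfl⟩ | rfl | ⟨i, hi1, hi2, rfl⟩ |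
      ⟨t, ht1, ht2, rfl⟩ | ⟨t, ht1, ht2, rfl⟩ | ⟨t, ht1, ht2, rfl⟩)
    · exact ⟨2 * t - 1, 2 * t + 2, by omega, by omega, by omega,
        (coreiii m p hm3 hmo _ _ (by omega) (by omega) (by omega)).mpr
          (Or.inl ⟨by omega, by omega, by omega⟩), rfl⟩
    · exact ⟨m, m + q + 1, by omega, by omega, by omega,
        (coreiii m p hm3 hmo _ _ (by omega) (by omega) (by omega)).mpr
          (Or.inr (Or.inl ⟨by omega, by omega, by omega⟩)), rfl⟩
    · exact ⟨m, m + p + 3, by omega, by omega, by omega,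
        (coreiii m p hm3 hmo _ _ (by omega) (by omega) (by omega)).mpr
          (Or.inr (Or.inr (Or.inl ⟨by omega, by omega⟩))), rfl⟩
    · exact ⟨i, m + p + 3, by omega, by omega, by omega,
        (coreiii m p hm3 hmo _ _ (by omega) (by omega) (by omega)).mpr
          (Or.inr (Or.inr (Or.inr (Or.inl ⟨by omega, by omega, by omega⟩)))), rfl⟩
    · exact ⟨m + p + 2 * t, m + p + 2 * t + 3, by omega, by omega, by omega,
        (coreiii m p hm3 hmo _ _ (by omega) (by omega) (by omega)).mpr
          (Or.inr (Or.inr (Or.inr (Or.inr (Or.inl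
            ⟨by omega, by omega, by omega, by omega⟩))))), rfl⟩
    · exact ⟨2 * t - 1, 2 * t, by omega, by omega, by omega,
        (coreiii m p hm3 hmo _ _ (by omega) (by omega) (by omega)).mpr
          (Or.inr (Or.inr (Or.inr (Or.inr (Or.inr (Or.inl
            ⟨by omega, by omega, by omega⟩)))))), rfl⟩
    · exact ⟨m + p + 2 * t, m + p + 2 * t + 1, by omega, by omega, by omega,
        (coreiii m p hm3 hmo _ _ (by omega) (by omega) (by omega)).mpr
          (Or.inr (Or.inr (Or.inr (Or.inr (Or.inr (Or.inr
            ⟨by omega, by omega, by omega, by omega⟩)))))), rfl⟩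

end DPW
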